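/- Let ⟨Z_n,{a,b}⟩ be a standardized DFA and r ≠ 0 with r·a = dupl(a). Then the set D₁⁰ = D₁ ∪ {0} is closed under addition of r; consequently D₁⁰ is a union of cosets of the cyclic subgroup ⟨r⟩ of (Z_n,+). -/

import Mathlib

/-- Action of a letter: `true` is `b : q ↦ q+1`, `false` is `a`. -/
def act {n : ℕ} (a : ZMod n → ZMod n) (q : ZMod n) (c : Bool) : ZMod n :=
  if c then q + 1 else a q

/-- Action of a word on a state. -/
def wact {n : ℕ} (a : ZMod n → ZMod n) (w : List Bool) (q : ZMod n) : ZMod n :=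
  w.foldl (act a) q

/-- Excluded set of a word. -/
def excl {n : ℕ} (a : ZMod n → ZMod n) (w : List Bool) : Set (ZMod n) :=
  {q | ∀ p, wact a w p ≠ q}

/-- Duplicate set of a word. -/
def dupl {n : ℕ} (a : ZMod n → ZMod n) (w : List Bool) : Set (ZMod n) :=
  {p | ∃ q₁ q₂, q₁ ≠ q₂ ∧ wact a w q₁ = p ∧ wact a w q₂ = p}

/-- Complete reachability for a standardized binary DFA on `ZMod n`. -/
def CompletelyReachable {n : ℕ} (a : ZMod n → ZMod n) : Prop :=
  ∀ S : Set (ZMod n), S.Nonempty → ∃ w : List Bool, Set.range (wact a w) = S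

/-- Standardized DFA: `a` has defect 1 with excluded state `0`, and `0·a = dupl(a)`,
i.e. `a 0` has a second preimage `r ≠ 0`. -/
def Standardized {n : ℕ} (a : ZMod n → ZMod n) : Prop :=
  Set.range a = {(0 : ZMod n)}ᶜ ∧ ∃ r : ZMod n, r ≠ 0 ∧ a r = a 0

/-- Edge of the Rystsov graph: for some word of defect 1, `q` is the excluded state
and `p` the duplicate state. -/
def RysEdge {n : ℕ} (a : ZMod n → ZMod n) (q p : ZMod n) : Prop :=
  ∃ w : List Bool, excl a w = {q} ∧ dupl a w = {p}

/-- The difference set `D₁`. -/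
def D1 {n : ℕ} (a : ZMod n → ZMod n) : Set (ZMod n) :=
  {p | RysEdge a 0 p}

/-!
Since `a` has defect 1 and identifies `0` with `r`, it is injective off `r`, so it shrinks
any finite set by at most one element. Appending `a`, resp. `b^r a`, to a word witnessing
`d ∈ D₁` (or using the word `a` for `d = 0`) shows that `a` maps both `D₁⁰` and `D₁⁰ + r`
into `D₁ = D₁⁰ \ {0}`. Hence `|D₁⁰ ∪ (D₁⁰ + r)| ≤ |D₁| + 1 = |D₁⁰|`, i.e. `D₁⁰ + r ⊆ D₁⁰`.
-/

open Set

section Defect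

variable {α β : Type*} {c c' : α}

lemma image_compl_singleton_eq_range {f : α → β} (hcc' : c ≠ c') (hf : f c = f c') :
    f '' {c}ᶜ = range f := by
  refine (image_subset_range f _).antisymm ?_
  rintro _ ⟨x, rfl⟩
  by_cases hx : x = c
  · exact ⟨c', hcc'.symm, by rw [hx, hf]⟩
  · exact ⟨x, hx, rfl⟩

lemma injOn_compl_singleton_of_range_eq [Finite α] {f : α → α} {z : α}
    (hrange : range f = {z}ᶜ) (hcc' : c ≠ c') (hf : f c = f c') : InjOn f {c}ᶜ := by
  refine injOn_of_ncard_image_eq ?_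
  rw [image_compl_singleton_eq_range hcc' hf, hrange, ncard_compl, ncard_compl,
    ncard_singleton, ncard_singleton]

lemma ncard_le_ncard_image_add_one {f : α → β} {s : Set α} (hs : s.Finite)
    (hf : InjOn f {c}ᶜ) : s.ncard ≤ (f '' s).ncard + 1 :=
  calc s.ncard ≤ (s \ {c}).ncard + 1 := by
        have := pred_ncard_le_ncard_sdiff_singleton s c
        omega
    _ = (f '' (s \ {c})).ncard + 1 := by
        rw [(hf.mono fun _ hx => hx.2).ncard_image]
    _ ≤ (f '' s).ncard + 1 :=
        Nat.add_le_add_right (ncard_le_ncard (image_mono sdiff_subset) (hs.image f)) 1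

end Defect

lemma add_mem_of_mem_closure_singleton {G : Type*} [AddGroup G] [Finite G] {s : Set G}
    {r : G} (hs : ∀ d ∈ s, d + r ∈ s) {d h : G} (hd : d ∈ s)
    (hh : h ∈ AddSubgroup.closure {r}) : d + h ∈ s := by
  rw [← AddSubgroup.zmultiples_eq_closure, ← mem_multiples_iff_mem_zmultiples] at hh
  obtain ⟨m, rfl⟩ : ∃ m : ℕ, m • r = h := hh
  induction m with
  | zero => simpa using hd
  | succ m ih => rw [succ_nsmul, ← add_assoc]; exact hs _ ih

section Words

variable {n : ℕ} {a : ZMod n → ZMod n}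

lemma wact_append (w v : List Bool) : wact a (w ++ v) = wact a v ∘ wact a w := by
  funext q
  simp only [wact, List.foldl_append, Function.comp_apply]

lemma wact_replicate_true_append_false (m : ℕ) :
    wact a (List.replicate m true ++ [false]) = a ∘ (· + (m : ZMod n)) := by
  funext q
  induction m generalizing q with
  | zero => simp [wact, act]
  | succ m ih =>
    rw [List.replicate_succ, List.cons_append]
    change wact a (List.replicate m true ++ [false]) (q + 1) = _
    rw [ih]
    simp only [Function.comp_apply, Nat.cast_succ, add_comm (m : ZMod n), add_assoc]

lemma excl_eq_compl_range (w : List Bool) : excl a w = (range (wact a w))ᶜ := by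
  ext q
  simp [excl]

lemma dupl_append_of_injOn {w v : List Bool} (h : InjOn (wact a v) (range (wact a w))) :
    dupl a (w ++ v) = wact a v '' dupl a w := by
  ext p
  simp only [dupl, wact_append, Function.comp_apply, mem_ofPred_eq, mem_image]
  constructor
  · rintro ⟨q₁, q₂, hne, h₁, h₂⟩
    exact ⟨_, ⟨q₁, q₂, hne, rfl, h (mem_range_self _) (mem_range_self _) (h₂.trans h₁.symm)⟩, h₁⟩
  · rintro ⟨_, ⟨q₁, q₂, hne, rfl, h₂⟩, rfl⟩
    exact ⟨q₁, q₂, hne, rfl, by rw [h₂]⟩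

lemma dupl_eq_singleton_of_injOn_compl {w : List Bool} {c c' : ZMod n}
    (hinj : InjOn (wact a w) {c}ᶜ) (hcc' : c ≠ c') (h : wact a w c = wact a w c') :
    dupl a w = {wact a w c} := by
  ext p
  constructor
  · rintro ⟨q₁, q₂, hne, rfl, h₂⟩
    rw [mem_singleton_iff]
    by_cases h₁c : q₁ = c
    · rw [h₁c]
    by_cases h₂c : q₂ = c
    · rw [← h₂, h₂c]
    exact absurd (hinj h₁c h₂c h₂.symm) hne
  · rintro rfl
    exact ⟨c, c', hcc', rfl, h.symm⟩

lemma rysEdge_iff {q p : ZMod n} :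
    RysEdge a q p ↔ ∃ w, range (wact a w) = {q}ᶜ ∧ dupl a w = {p} := by
  simp only [RysEdge, excl_eq_compl_range, compl_eq_comm, eq_comm (a := range _)]

lemma RysEdge.ne {q p : ZMod n} (h : RysEdge a q p) : p ≠ q := by
  obtain ⟨w, hw, hp⟩ := rysEdge_iff.1 h
  have hpw : p ∈ dupl a w := hp ▸ rfl
  obtain ⟨q₁, -, -, h₁, -⟩ := hpw
  have : p ∈ range (wact a w) := ⟨q₁, h₁⟩
  rwa [hw] at this

end Words

section Standardized

variable {n : ℕ} [NeZero n] {a : ZMod n → ZMod n} {c c' : ZMod n}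

lemma rysEdge_zero_apply (h1 : range a = {0}ᶜ) (hcc' : c ≠ c') (hac : a c = a c') :
    RysEdge a 0 (a c) :=
  rysEdge_iff.2 ⟨[false], h1,
    dupl_eq_singleton_of_injOn_compl (injOn_compl_singleton_of_range_eq h1 hcc' hac) hcc' hac⟩

lemma RysEdge.apply_add {d : ZMod n} (h1 : range a = {0}ᶜ) (hcc' : c ≠ c')
    (hac : a c = a c') (hd : RysEdge a 0 d) : RysEdge a 0 (a (d + c)) := by
  obtain ⟨w, hw, hdw⟩ := rysEdge_iff.1 hd
  have hv : wact a (List.replicate c.val true ++ [false]) = a ∘ (· + c) := by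
    rw [wact_replicate_true_append_false, ZMod.natCast_zmod_val]
  have hshift : (· + c) '' ({0}ᶜ : Set (ZMod n)) = {c}ᶜ := by simp
  have hinj : InjOn (a ∘ (· + c)) {0}ᶜ :=
    (injOn_compl_singleton_of_range_eq h1 hcc' hac).comp (add_left_injective c).injOn
      (hshift ▸ mapsTo_image _ _)
  refine rysEdge_iff.2 ⟨w ++ List.replicate c.val true ++ [false], ?_, ?_⟩
  · rw [List.append_assoc, wact_append, range_comp, hw, hv, image_comp, hshift,
      image_compl_singleton_eq_range hcc' hac, h1]
  · rw [List.append_assoc, dupl_append_of_injOn (hv ▸ hw ▸ hinj), hdw, image_singleton, hv,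
      Function.comp_apply]

lemma apply_add_mem_D1 {d : ZMod n} (h1 : range a = {0}ᶜ) (hcc' : c ≠ c') (hac : a c = a c')
    (hd : d ∈ D1 a ∪ {0}) : a (d + c) ∈ D1 a := by
  rcases hd with hd | rfl
  · exact RysEdge.apply_add h1 hcc' hac hd
  · rw [zero_add]
    exact rysEdge_zero_apply h1 hcc' hac

end Standardized

theorem D1zero_union_of_cosets {n : ℕ} (hn : 2 ≤ n) (a : ZMod n → ZMod n)
    (h1 : Set.range a = {(0 : ZMod n)}ᶜ)
    (r : ZMod n) (hr : r ≠ 0) (hra : a r = a 0) :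
    (∀ d ∈ D1 a ∪ {0}, d + r ∈ D1 a ∪ {0}) ∧
    (∀ d ∈ D1 a ∪ {0}, ∀ h ∈ AddSubgroup.closure {r}, d + h ∈ D1 a ∪ {0}) := by
  have : NeZero n := ⟨by omega⟩
  set D0 := D1 a ∪ {0}
  have hmaps : a '' (D0 ∪ (· + r) '' D0) ⊆ D1 a := by
    rintro _ ⟨x, hx | ⟨d, hd, rfl⟩, rfl⟩
    · simpa using apply_add_mem_D1 h1 hr.symm hra.symm hx
    · exact apply_add_mem_D1 h1 hr hra hd
  have hD0 : D0 ∪ (· + r) '' D0 = D0 := by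
    refine (eq_of_subset_of_ncard_le subset_union_left ?_).symm
    calc (D0 ∪ (· + r) '' D0).ncard
        ≤ (a '' (D0 ∪ (· + r) '' D0)).ncard + 1 :=
          ncard_le_ncard_image_add_one (toFinite _) (injOn_compl_singleton_of_range_eq h1 hr hra)
      _ ≤ (D1 a).ncard + 1 := Nat.add_le_add_right (ncard_le_ncard hmaps) 1
      _ = D0.ncard := by
          rw [show D0 = insert 0 (D1 a) from union_singleton,
            ncard_insert_of_notMem fun h : (0 : ZMod n) ∈ D1 a => RysEdge.ne h rfl]
  have hclosed : ∀ d ∈ D0, d + r ∈ D0 := fun d hd => hD0 ▸ Or.inr ⟨d, hd, rfl⟩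
  exact ⟨hclosed, fun d hd h hh => add_mem_of_mem_closure_singleton hclosed hd hh⟩
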